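/- arXiv:1908.06808 — 2 statements merged into one kernel-verified Lean document; each statement's English description precedes it below -/
import Mathlib

section
/- Let p be a prime, z a complex number, G = (Z/qZ)^× with q coprime to p, G0 a subgroup of G, and H the cyclic subgroup of G generated by p mod q. Then ∏_{χ ∈ G0^⊥} (1 - χ(p)z) = (1 - z^{|HG0/G0|})^{|G/(HG0)|}, where G0^⊥ denotes the group of Dirichlet characters of G that are trivial on G0. -/
/-!
Characters of `G` trivial on `G0` are the characters `ψ` of `Q = G ⧸ G0`, and `χ p = ψ ū` where
`ū` is the image of `p`. Restriction of characters of `Q` to the cyclic subgroup `⟨ū⟩` is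
surjective with fibres of size `[Q : ⟨ū⟩]`, and evaluation at `ū` identifies the characters of
`⟨ū⟩` with the `d`-th roots of unity, `d = orderOf ū`. Hence the product is
`(∏_{ζ ^ d = 1} (1 - ζ z)) ^ [Q : ⟨ū⟩] = (1 - z ^ d) ^ [Q : ⟨ū⟩]`, and in `G` one reads off
`d = [H G0 : G0]` and `[Q : ⟨ū⟩] = [G : H G0]`.
-/

open Subgroup Finset

theorem MonoidHom.prod_comp_eq_prod_pow_card_ker {A B M : Type*} [Group A] [Fintype A]
    [Group B] [Fintype B] [CommMonoid M] {f : A →* B} (hf : Function.Surjective f)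
    (F : B → M) : ∏ x, F (f x) = (∏ y, F y) ^ Nat.card f.ker := by
  classical
  have card_fiber (y : B) : #{x | f x = y} = Nat.card f.ker := by
    rw [MonoidHom.card_fiber_eq_of_mem_range f (hf y) ⟨1, map_one f⟩, ← Fintype.card_subtype,
      ← Nat.card_eq_fintype_card]
    rfl
  rw [prod_comp, image_univ_of_surjective hf, ← prod_pow]
  simp only [card_fiber]

theorem IsPrimitiveRoot.prod_one_sub_mul_nthRootsFinset {K : Type*} [Field K] {ζ : K} {n : ℕ}
    (hζ : IsPrimitiveRoot ζ n) (hn : 0 < n) (z : K) :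
    ∏ w ∈ Polynomial.nthRootsFinset n (1 : K), (1 - w * z) = 1 - z ^ n := by
  rcases eq_or_ne z 0 with rfl | hz
  · simp [zero_pow hn.ne']
  have hroots := congrArg (Polynomial.eval z⁻¹) (Polynomial.X_pow_sub_one_eq_prod hn hζ)
  simp only [Polynomial.eval_sub, Polynomial.eval_pow, Polynomial.eval_X, Polynomial.eval_one,
    Polynomial.eval_prod, Polynomial.eval_C] at hroots
  calc ∏ w ∈ Polynomial.nthRootsFinset n (1 : K), (1 - w * z)
      = ∏ w ∈ Polynomial.nthRootsFinset n (1 : K), (z * (z⁻¹ - w)) :=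
        prod_congr rfl fun w _ => by field_simp
    _ = z ^ n * (z⁻¹ ^ n - 1) := by
        rw [prod_mul_distrib, prod_const, hζ.card_nthRootsFinset, hroots]
    _ = 1 - z ^ n := by rw [mul_sub, ← mul_pow, mul_inv_cancel₀ hz]; ring

theorem prod_one_sub_apply_zpowers_mul {G K : Type*} [Group G] [Finite G] [Field K] (a : G)
    [HasEnoughRootsOfUnity K (orderOf a)] [Fintype (zpowers a →* Kˣ)] (z : K) :
    ∏ φ : zpowers a →* Kˣ, (1 - φ ⟨a, mem_zpowers a⟩ * z) = 1 - z ^ orderOf a := by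
  classical
  obtain ⟨ζ, hζ⟩ := HasEnoughRootsOfUnity.exists_primitiveRoot K (orderOf a)
  let ev : (zpowers a →* Kˣ) → K := fun φ => φ ⟨a, mem_zpowers a⟩
  have ev_injective : Function.Injective ev := by
    intro φ ψ h
    ext ⟨_, k, rfl⟩
    have : (⟨a ^ k, k, rfl⟩ : zpowers a) = ⟨a, mem_zpowers a⟩ ^ k := rfl
    simp only [this, map_zpow, Units.ext h]
  have ev_mem (φ : zpowers a →* Kˣ) : ev φ ∈ Polynomial.nthRootsFinset (orderOf a) (1 : K) := by
    have : (⟨a, mem_zpowers a⟩ : zpowers a) ^ orderOf a = 1 := Subtype.ext (pow_orderOf_eq_one a)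
    rw [Polynomial.mem_nthRootsFinset (orderOf_pos a), ← Units.val_pow_eq_pow_val, ← map_pow, this,
      map_one, Units.val_one]
  have image_ev : univ.image ev = Polynomial.nthRootsFinset (orderOf a) (1 : K) := by
    refine eq_of_subset_of_card_le (fun w hw => ?_) ?_
    · obtain ⟨φ, -, rfl⟩ := mem_image.mp hw
      exact ev_mem φ
    · rw [card_image_of_injective _ ev_injective, hζ.card_nthRootsFinset, card_univ,
        ← Nat.card_eq_fintype_card]
      have : HasEnoughRootsOfUnity K (Nat.card (zpowers a)) := by rwa [Nat.card_zpowers]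
      -- the `CommGroup` structure on `zpowers a` is only available through this scoped instance
      open scoped IsMulCommutative in
      rw [Nat.card_congr (IsCyclic.monoidHom_equiv_self (zpowers a) K).some.toEquiv,
        Nat.card_zpowers]
  rw [← hζ.prod_one_sub_mul_nthRootsFinset (orderOf_pos a), ← image_ev,
    prod_image ev_injective.injOn]

theorem finprod_one_sub_apply_mul {G K : Type*} [CommGroup G] [Finite G] [Field K]
    [HasEnoughRootsOfUnity K (Monoid.exponent G)] (a : G) (z : K) :
    ∏ᶠ ψ : G →* Kˣ, (1 - ψ a * z) = (1 - z ^ orderOf a) ^ (zpowers a).index := by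
  have : HasEnoughRootsOfUnity K (orderOf a) := .of_dvd K (Monoid.order_dvd_exponent a)
  have : HasEnoughRootsOfUnity K (Monoid.exponent (zpowers a)) :=
    .of_dvd K (Monoid.exponent_submonoid_dvd (zpowers a).toSubmonoid)
  have := Fintype.ofFinite (G →* Kˣ)
  have := Fintype.ofFinite (zpowers a →* Kˣ)
  rw [finprod_eq_prod_of_fintype, ← prod_one_sub_apply_zpowers_mul, index,
    ← CommGroup.card_domRestrictHom_ker K (zpowers a)]
  exact MonoidHom.prod_comp_eq_prod_pow_card_ker (MonoidHom.domRestrict_surjective K _)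
    (fun φ : zpowers a →* Kˣ => 1 - φ ⟨a, mem_zpowers a⟩ * z)

theorem QuotientGroup.orderOf_mk_eq_relIndex {G : Type*} [Group G] (N : Subgroup G) [N.Normal]
    (g : G) : orderOf (g : G ⧸ N) = N.relIndex (zpowers g ⊔ N) := by
  have hN : N.map (QuotientGroup.mk' N) = ⊥ := by
    rw [Subgroup.map_eq_bot_iff, QuotientGroup.ker_mk']
  rw [← Nat.card_zpowers, ← relIndex_bot_left, ← hN, ← QuotientGroup.coe_mk',
    ← MonoidHom.map_zpowers, relIndex_map_map, QuotientGroup.ker_mk', sup_idem]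

theorem QuotientGroup.index_zpowers_mk {G : Type*} [Group G] (N : Subgroup G) [N.Normal]
    (g : G) : (zpowers (g : G ⧸ N)).index = (zpowers g ⊔ N).index := by
  rw [← QuotientGroup.coe_mk', ← MonoidHom.map_zpowers, index_map, QuotientGroup.ker_mk',
    QuotientGroup.range_mk', index_top, mul_one]

noncomputable def QuotientGroup.monoidHomEquiv {G M : Type*} [Group G] [Monoid M]
    (N : Subgroup G) [N.Normal] :
    (G ⧸ N →* M) ≃ {φ : G →* M // ∀ g ∈ N, φ g = 1} where
  toFun ψ := ⟨ψ.comp (QuotientGroup.mk' N), fun g hg => by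
    simp [(QuotientGroup.eq_one_iff g).mpr hg]⟩
  invFun φ := QuotientGroup.lift N φ.1 φ.2
  left_inv ψ := by ext x; rfl
  right_inv φ := rfl

noncomputable def MulChar.equivQuotientMonoidHom {R R' : Type*} [CommMonoid R]
    [CommMonoidWithZero R'] (N : Subgroup Rˣ) :
    {χ : MulChar R R' // ∀ g ∈ N, χ g = 1} ≃ (Rˣ ⧸ N →* R'ˣ) :=
  (MulChar.equivToUnitHom.subtypeEquiv fun χ => forall₂_congr fun g _ => by
    rw [Units.ext_iff, MulChar.coe_equivToUnitHom, Units.val_one]).trans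
    (QuotientGroup.monoidHomEquiv N).symm

theorem MulChar.equivQuotientMonoidHom_apply_mk {R R' : Type*} [CommMonoid R]
    [CommMonoidWithZero R'] (N : Subgroup Rˣ) (χ : {χ : MulChar R R' // ∀ g ∈ N, χ g = 1})
    (g : Rˣ) : (equivQuotientMonoidHom N χ (g : Rˣ ⧸ N) : R') = χ.1 g :=
  MulChar.coe_equivToUnitHom χ.1 g

theorem prod_characters_trivial_on_subgroup_general (q : ℕ) [NeZero q] (p : ℕ)
    (hpq : Nat.Coprime p q) (z : ℂ) (G0 : Subgroup (ZMod q)ˣ) :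
    (∏ᶠ (χ : DirichletCharacter ℂ q) (_ : ∀ g : (ZMod q)ˣ, g ∈ G0 → χ g = 1),
        (1 - χ p * z))
      = (1 - z ^ (G0.relIndex (Subgroup.zpowers (ZMod.unitOfCoprime p hpq) ⊔ G0)))
          ^ (Subgroup.zpowers (ZMod.unitOfCoprime p hpq) ⊔ G0).index := by
  set u := ZMod.unitOfCoprime p hpq
  have : NeZero (Monoid.exponent ((ZMod q)ˣ ⧸ G0)) :=
    ⟨Monoid.exponent_ne_zero_of_finite (G := (ZMod q)ˣ ⧸ G0)⟩
  rw [← QuotientGroup.orderOf_mk_eq_relIndex, ← QuotientGroup.index_zpowers_mk,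
    ← finprod_one_sub_apply_mul (u : (ZMod q)ˣ ⧸ G0) z, ← finprod_subtype_eq_finprod_cond,
    ← finprod_comp_equiv (MulChar.equivQuotientMonoidHom G0).symm]
  refine finprod_congr fun ψ => ?_
  rw [← ZMod.coe_unitOfCoprime p hpq, ← MulChar.equivQuotientMonoidHom_apply_mk,
    Equiv.apply_symm_apply]

/-- For a prime `p` coprime to `q`, a subgroup `G0` of `G = (ZMod q)ˣ`, and
`H = ⟨p mod q⟩`, one has `∏_{χ ∈ G0^⊥} (1 - χ(p) z) = (1 - z^{[HG0 : G0]})^{[G : HG0]}`. -/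
theorem prod_characters_trivial_on_subgroup (q : ℕ) [NeZero q] (p : ℕ) (hp : p.Prime)
    (hpq : Nat.Coprime p q) (z : ℂ) (G0 : Subgroup (ZMod q)ˣ) :
    (∏ᶠ (χ : DirichletCharacter ℂ q) (_ : ∀ g : (ZMod q)ˣ, g ∈ G0 → χ g = 1),
        (1 - χ p * z))
      = (1 - z ^ (G0.relIndex (Subgroup.zpowers (ZMod.unitOfCoprime p hpq) ⊔ G0)))
          ^ (Subgroup.zpowers (ZMod.unitOfCoprime p hpq) ⊔ G0).index :=
  prod_characters_trivial_on_subgroup_general q p hpq z G0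
end

section
/- Let n be a positive integer and for ℓ ≥ 0 let d_ℓ*(n) denote the number of ℓ-tuples (d_1,…,d_ℓ) of divisors of n with each d_i > 1 and d_1·d_2⋯d_ℓ = n. Then ∑_{ℓ ≥ 0} (-1)^ℓ d_ℓ*(n) = μ(n), the Möbius function of n. -/
/-- `dstar ℓ n` is the number of `ℓ`-tuples `(d_1, …, d_ℓ)` of divisors of `n`,
each `> 1`, whose product is `n`. -/
noncomputable def dstar (ℓ n : ℕ) : ℕ :=
  Nat.card {f : Fin ℓ → ℕ // (∀ i, f i ∣ n ∧ 1 < f i) ∧ ∏ i, f i = n}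

/-!
In the ring of arithmetic functions over `ℤ`, `(-1)^ℓ d_ℓ*` is the `ℓ`-th Dirichlet power of
`1 - ζ`: expanding that power over ordered factorisations, a factorisation contributes exactly
when all its factors exceed `1`. The geometric sum gives
`ζ * ∑_{ℓ ≤ N} (1 - ζ)^ℓ = 1 - (1 - ζ)^(N+1)`, and `(1 - ζ)^(N+1)` vanishes below `2^(N+1)`,
so multiplying by `μ = ζ⁻¹` yields `∑_{ℓ ≤ N} (-1)^ℓ d_ℓ*(n) = μ(n)` for all `n ≤ N`.
-/

open Finset

namespace ArithmeticFunction

open scoped ArithmeticFunction.zeta ArithmeticFunction.Moebius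

theorem sub_apply {R : Type*} [AddGroup R] (f g : ArithmeticFunction R) (n : ℕ) :
    (f - g) n = f n - g n := by
  rw [sub_eq_add_neg, add_apply, neg_apply, sub_eq_add_neg]

theorem sum_apply {R ι : Type*} [AddCommMonoid R] (s : Finset ι) (f : ι → ArithmeticFunction R)
    (n : ℕ) : (∑ i ∈ s, f i) n = ∑ i ∈ s, f i n :=
  map_sum ({ toFun := fun f => f n, map_zero' := zero_apply, map_add' := fun _ _ => add_apply } :
    ArithmeticFunction R →+ R) f s

theorem mul_apply_eq_zero_of_forall_le {R : Type*} [Semiring R] {f g : ArithmeticFunction R}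
    {n : ℕ} (hg : ∀ m ≤ n, g m = 0) : (f * g) n = 0 := by
  rw [mul_apply]
  refine sum_eq_zero fun x hx => ?_
  rw [hg x.2 (Nat.divisor_le (Nat.snd_mem_divisors_of_mem_antidiagonal hx)), mul_zero]

theorem pow_apply_eq_sum_finMulAntidiag {R : Type*} [CommSemiring R]
    (f : ArithmeticFunction R) (ℓ n : ℕ) :
    (f ^ ℓ) n = ∑ g ∈ Nat.finMulAntidiag ℓ n, ∏ i, f (g i) := by
  induction ℓ generalizing n with
  | zero =>
    by_cases hn : n = 1
    · simp [hn, Nat.finMulAntidiag_one]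
    · simp [hn, Nat.finMulAntidiag_zero_left, one_apply_ne]
  | succ ℓ ih =>
    rw [pow_succ', mul_apply]
    simp_rw [ih, mul_sum]
    rw [sum_sigma']
    refine sum_bij' (fun x _ => Fin.cons x.1.1 x.2)
      (fun (g : Fin (ℓ + 1) → ℕ) _ => ⟨(g 0, ∏ i : Fin ℓ, g i.succ), Fin.tail g⟩) ?_ ?_ ?_ ?_ ?_
    · rintro ⟨⟨a, b⟩, g⟩ hx
      simp only [mem_sigma, Nat.mem_divisorsAntidiagonal, Nat.mem_finMulAntidiag] at hx ⊢
      rw [Fin.prod_cons, hx.2.1, hx.1.1]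
      exact ⟨rfl, hx.1.2⟩
    · intro g hg
      simp only [mem_sigma, Nat.mem_divisorsAntidiagonal, Nat.mem_finMulAntidiag] at hg ⊢
      rw [← Fin.prod_univ_succ]
      refine ⟨hg, rfl, right_ne_zero_of_mul (a := g 0) ?_⟩
      rw [← Fin.prod_univ_succ, hg.1]
      exact hg.2
    · rintro ⟨⟨a, b⟩, g⟩ hx
      simp only [mem_sigma, Nat.mem_finMulAntidiag] at hx
      simp [hx.2.1]
    · intro g _
      simp
    · rintro ⟨⟨a, b⟩, g⟩ _
      simp [Fin.prod_univ_succ]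

theorem zeta_sub_one_apply {R : Type*} [AddGroupWithOne R] (m : ℕ) :
    ((ζ : ArithmeticFunction R) - 1) m = if 1 < m then 1 else 0 := by
  rw [sub_apply, natCoe_apply, zeta_apply, one_apply]
  rcases Nat.lt_trichotomy m 1 with h | rfl | h
  · simp [Nat.lt_one_iff.mp h]
  · simp
  · simp [h, h.ne', (zero_lt_one.trans h).ne']

theorem sum_range_one_sub_zeta_pow {R : Type*} [CommRing R] (N : ℕ) :
    ∑ ℓ ∈ range N, (1 - (ζ : ArithmeticFunction R)) ^ ℓ
      = μ - μ * (1 - (ζ : ArithmeticFunction R)) ^ N := by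
  rw [← mul_one_sub, ← mul_neg_geom_sum, sub_sub_cancel, ← mul_assoc,
    coe_moebius_mul_coe_zeta, one_mul]

end ArithmeticFunction

open scoped ArithmeticFunction.zeta

theorem dstar_eq_card_filter_finMulAntidiag (ℓ n : ℕ) :
    dstar ℓ n = #{g ∈ Nat.finMulAntidiag ℓ n | ∀ i, 1 < g i} := by
  rw [dstar, ← Nat.card_eq_finsetCard]
  refine Nat.card_congr (Equiv.subtypeEquivRight fun g => ?_)
  simp only [mem_filter, Nat.mem_finMulAntidiag]
  constructor
  · rintro ⟨h, rfl⟩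
    exact ⟨⟨rfl, prod_ne_zero_iff.mpr fun i _ => (zero_lt_one.trans (h i).2).ne'⟩, fun i => (h i).2⟩
  · rintro ⟨⟨rfl, -⟩, h⟩
    exact ⟨fun i => ⟨dvd_prod_of_mem g (mem_univ i), h i⟩, rfl⟩

theorem dstar_eq_zero_of_lt_two_pow {ℓ n : ℕ} (h : n < 2 ^ ℓ) : dstar ℓ n = 0 := by
  rw [dstar_eq_card_filter_finMulAntidiag, card_eq_zero, filter_eq_empty_iff]
  intro g hg hgt
  have : 2 ^ ℓ ≤ ∏ i, g i := by simpa using pow_card_le_prod univ g 2 fun i _ => hgt i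
  rw [Nat.prod_eq_of_mem_finMulAntidiag hg] at this
  omega

theorem one_sub_zeta_pow_apply (ℓ n : ℕ) :
    ((1 - ζ : ArithmeticFunction ℤ) ^ ℓ) n = (-1) ^ ℓ * dstar ℓ n := by
  rw [ArithmeticFunction.pow_apply_eq_sum_finMulAntidiag, dstar_eq_card_filter_finMulAntidiag,
    card_filter, Nat.cast_sum, mul_sum]
  refine sum_congr rfl fun g _ => ?_
  have h (m : ℕ) : (1 - ζ : ArithmeticFunction ℤ) m = -if 1 < m then 1 else 0 := by
    rw [← neg_sub, ArithmeticFunction.neg_apply, ArithmeticFunction.zeta_sub_one_apply]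
  simp_rw [h, prod_neg, prod_boole]
  simp

theorem alternating_sum_dstar_eq_moebius_general (n : ℕ) :
    ∑ ℓ ∈ Finset.range (n + 1), ((-1 : ℤ) ^ ℓ * dstar ℓ n)
      = ArithmeticFunction.moebius n := by
  have hvanish (m : ℕ) (hm : m ≤ n) : ((1 - ζ : ArithmeticFunction ℤ) ^ (n + 1)) m = 0 := by
    have : m < 2 ^ (n + 1) := hm.trans_lt (Nat.lt_succ_self n) |>.trans Nat.lt_two_pow_self
    rw [one_sub_zeta_pow_apply, dstar_eq_zero_of_lt_two_pow this, Nat.cast_zero, mul_zero]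
  simp_rw [← one_sub_zeta_pow_apply]
  rw [← ArithmeticFunction.sum_apply, ArithmeticFunction.sum_range_one_sub_zeta_pow,
    ArithmeticFunction.sub_apply, ArithmeticFunction.mul_apply_eq_zero_of_forall_le hvanish,
    sub_zero, ArithmeticFunction.intCoe_int]

/-- `∑_{ℓ ≥ 0} (-1)^ℓ d_ℓ*(n) = μ(n)`; the sum is finite since `d_ℓ*(n) = 0`
for `ℓ > Ω(n) `, in particular for `ℓ > n`. -/
theorem alternating_sum_dstar_eq_moebius (n : ℕ) (hn : 1 ≤ n) :
    ∑ ℓ ∈ Finset.range (n + 1), ((-1 : ℤ) ^ ℓ * dstar ℓ n)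
      = ArithmeticFunction.moebius n :=
  alternating_sum_dstar_eq_moebius_general n
end
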